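/- For all natural numbers ℓ and N with ℓ ≤ N, the integral over ℂ of the function z ↦ (ℓ − N·|z|²/(1+|z|²) + (1−|z|²)/(1+|z|²)) · |z|^(2ℓ)/(1+|z|²)^(N+2) · 2 with respect to Lebesgue measure equals 0. (This is the statement ∫_{S²} Φ·(ψ₀ − (|z|²−1)/(|z|²+1)) ω_FS = 0, where ψ₀(z) = ℓ − N|z|²/(1+|z|²), Φ(z) = |z|^(2ℓ)/(1+|z|²)^N, and ω_FS = i dz∧dz̄/(1+|z|²)² with i dz∧dz̄ = 2 dA.) -/

import Mathlib

/-!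
In polar coordinates the integral is a multiple of `∫₀^∞ r f(r) dr`, and `r f(r)` is the derivative of
`r ^ (2ℓ + 2) / (1 + r²) ^ (N + 2)`, which vanishes at `r = 0` and, because `ℓ ≤ N`, at infinity.
-/

open MeasureTheory Set Filter Topology

noncomputable def futakiIntegrand (ℓ N : ℕ) (r : ℝ) : ℝ :=
  ((ℓ : ℝ) - (N : ℝ) * r ^ 2 / (1 + r ^ 2) + (1 - r ^ 2) / (1 + r ^ 2)) *
    (r ^ (2 * ℓ) / (1 + r ^ 2) ^ (N + 2)) * 2

noncomputable def futakiPrimitive (ℓ N : ℕ) (r : ℝ) : ℝ :=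
  r ^ (2 * ℓ + 2) / (1 + r ^ 2) ^ (N + 2)

lemma hasDerivAt_futakiPrimitive (ℓ N : ℕ) (r : ℝ) :
    HasDerivAt (futakiPrimitive ℓ N) (r * futakiIntegrand ℓ N r) r := by
  have hden : HasDerivAt (fun r : ℝ => 1 + r ^ 2) (2 * r) r := by
    simpa using (hasDerivAt_pow 2 r).const_add 1
  refine ((hasDerivAt_pow (2 * ℓ + 2) r).fun_div (hden.fun_pow (N + 2))
    (by positivity)).congr_deriv ?_
  unfold futakiIntegrand
  field_simp
  push_cast
  ring

lemma abs_pow_le_one_add_sq_pow {k n : ℕ} (hkn : k ≤ 2 * n) (r : ℝ) :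
    |r| ^ k ≤ (1 + r ^ 2) ^ n := by
  have hr : |r| ≤ √(1 + r ^ 2) := Real.abs_le_sqrt (by linarith)
  have hone : 1 ≤ √(1 + r ^ 2) := Real.one_le_sqrt.mpr (by nlinarith)
  calc |r| ^ k ≤ √(1 + r ^ 2) ^ k := pow_le_pow_left₀ (abs_nonneg r) hr k
    _ ≤ √(1 + r ^ 2) ^ (2 * n) := pow_le_pow_right₀ hone hkn
    _ = (1 + r ^ 2) ^ n := by rw [pow_mul, Real.sq_sqrt (by positivity)]

lemma abs_pow_div_one_add_sq_pow_le {k n : ℕ} (hkn : k ≤ 2 * n) (r : ℝ) :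
    |r| ^ k / (1 + r ^ 2) ^ (n + 1) ≤ (1 + r ^ 2)⁻¹ := by
  calc |r| ^ k / (1 + r ^ 2) ^ (n + 1) ≤ (1 + r ^ 2) ^ n / (1 + r ^ 2) ^ (n + 1) := by
        gcongr
        exact abs_pow_le_one_add_sq_pow hkn r
    _ = (1 + r ^ 2)⁻¹ := by rw [pow_succ _ n, div_mul_cancel_left₀ (by positivity)]

lemma tendsto_futakiPrimitive_atTop {ℓ N : ℕ} (h : ℓ ≤ N) :
    Tendsto (futakiPrimitive ℓ N) atTop (𝓝 0) := by
  have hinv : Tendsto (fun r : ℝ => (1 + r ^ 2)⁻¹) atTop (𝓝 0) :=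
    tendsto_inv_atTop_zero.comp
      (tendsto_atTop_add_const_left _ _ (tendsto_pow_atTop two_ne_zero))
  have heven : Even (2 * ℓ + 2) := ⟨ℓ + 1, by ring⟩
  refine squeeze_zero (fun r => ?_) (fun r => ?_) hinv
  · exact div_nonneg (heven.pow_nonneg r) (by positivity)
  · have := abs_pow_div_one_add_sq_pow_le (show 2 * ℓ + 2 ≤ 2 * (N + 1) by omega) r
    rwa [heven.pow_abs] at this

lemma abs_futakiWeight_le {ℓ N : ℕ} (h : ℓ ≤ N) (r : ℝ) :
    |(ℓ : ℝ) - (N : ℝ) * r ^ 2 / (1 + r ^ 2) + (1 - r ^ 2) / (1 + r ^ 2)| ≤ (N + 1 : ℝ) := by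
  have hpos : (0 : ℝ) < 1 + r ^ 2 := by positivity
  have ht0 : 0 ≤ r ^ 2 / (1 + r ^ 2) := by positivity
  have ht1 : r ^ 2 / (1 + r ^ 2) ≤ 1 := (div_le_one hpos).mpr (by linarith)
  have hweight : (ℓ : ℝ) - (N : ℝ) * r ^ 2 / (1 + r ^ 2) + (1 - r ^ 2) / (1 + r ^ 2)
      = ℓ + 1 - (N + 2) * (r ^ 2 / (1 + r ^ 2)) := by
    field_simp; ring
  have hℓN : (ℓ : ℝ) ≤ N := by exact_mod_cast h
  rw [hweight, abs_le]
  constructor <;> nlinarith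

lemma abs_mul_futakiIntegrand_le {ℓ N : ℕ} (h : ℓ ≤ N) (r : ℝ) :
    |r * futakiIntegrand ℓ N r| ≤ 2 * (N + 1 : ℝ) * (1 + r ^ 2)⁻¹ := by
  have hpow := abs_pow_div_one_add_sq_pow_le (show 2 * ℓ + 1 ≤ 2 * (N + 1) by omega) r
  have hsplit : |r * futakiIntegrand ℓ N r| =
      |(ℓ : ℝ) - (N : ℝ) * r ^ 2 / (1 + r ^ 2) + (1 - r ^ 2) / (1 + r ^ 2)| *
        (|r| ^ (2 * ℓ + 1) / (1 + r ^ 2) ^ (N + 2)) * 2 := by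
    rw [futakiIntegrand, abs_mul, abs_mul, abs_mul, abs_div, abs_pow, abs_pow, abs_two,
      abs_of_pos (by positivity : (0 : ℝ) < 1 + r ^ 2)]
    ring
  rw [hsplit]
  calc _ ≤ (N + 1 : ℝ) * (1 + r ^ 2)⁻¹ * 2 := by
        gcongr
        exact abs_futakiWeight_le h r
    _ = _ := by ring

lemma integrableOn_mul_futakiIntegrand {ℓ N : ℕ} (h : ℓ ≤ N) :
    IntegrableOn (fun r => r * futakiIntegrand ℓ N r) (Ioi 0) := by
  refine (integrable_inv_one_add_sq.const_mul (2 * (N + 1 : ℝ))).mono' ?_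
    (.of_forall fun r => abs_mul_futakiIntegrand_le h r) |>.integrableOn
  unfold futakiIntegrand
  fun_prop

lemma integral_Ioi_mul_futakiIntegrand {ℓ N : ℕ} (h : ℓ ≤ N) :
    ∫ r in Ioi 0, r * futakiIntegrand ℓ N r = 0 := by
  rw [integral_Ioi_of_hasDerivAt_of_tendsto' (fun r _ => hasDerivAt_futakiPrimitive ℓ N r)
    (integrableOn_mul_futakiIntegrand h) (tendsto_futakiPrimitive_atTop h)]
  simp [futakiPrimitive]

theorem futaki_Phi_psi0_integral (ℓ N : ℕ) (h : ℓ ≤ N) :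
    ∫ z : ℂ, ((ℓ : ℝ) - (N : ℝ) * ‖z‖ ^ 2 / (1 + ‖z‖ ^ 2) +
        (1 - ‖z‖ ^ 2) / (1 + ‖z‖ ^ 2)) *
      (‖z‖ ^ (2 * ℓ) / (1 + ‖z‖ ^ 2) ^ (N + 2)) * 2 = 0 := by
  change ∫ z : ℂ, futakiIntegrand ℓ N ‖z‖ = 0
  rw [integral_fun_norm_addHaar volume (futakiIntegrand ℓ N), Complex.finrank_real_complex]
  simp [integral_Ioi_mul_futakiIntegrand h]
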